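/- arXiv:2306.03074 — 5 statements merged into one kernel-verified Lean document; each statement's English description precedes it below -/
import Mathlib

section
/- Define the Bellman operator B_π : ℝ^S → ℝ^S by B_π v = r_π + γ P_π v. Then for every λ ∈ (0,1) and every v ∈ ℝ^S, the λ-Bellman operator B_π^{(λ)} v := (1-λ) Σ_{t=0}^∞ λ^t (B_π)^{t+1} v is a convergent series and satisfies B_π^{(λ)} v = r_π^{(λ)} + γ̃ · P_π^{(λ)} v, where γ̃ = γ(1-λ)/(1-γλ), P_π^{(λ)} = (1-γλ) Σ_{t=0}^∞ (γλ)^t P_π^{t+1}, and r_π^{(λ)} = Σ_{t=0}^∞ (γλ)^t P_π^t r_π. -/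
lemma stoch_mulVec_norm_le {S : Type*} [Fintype S] (M : Matrix S S ℝ)
    (h0 : ∀ s s', 0 ≤ M s s') (h1 : ∀ s, ∑ s', M s s' = 1) (w : S → ℝ) :
    ‖M.mulVec w‖ ≤ ‖w‖ := by
  rw [pi_norm_le_iff_of_nonneg (norm_nonneg w)]
  intro s
  have hv : M.mulVec w s = ∑ s', M s s' * w s' := rfl
  rw [Real.norm_eq_abs, hv]
  calc |∑ s', M s s' * w s'| ≤ ∑ s', |M s s' * w s'| := Finset.abs_sum_le_sum_abs _ _
    _ ≤ ∑ s', M s s' * ‖w‖ := by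
        refine Finset.sum_le_sum fun s' _ => ?_
        rw [abs_mul, abs_of_nonneg (h0 s s')]
        exact mul_le_mul_of_nonneg_left ((Real.norm_eq_abs _ ▸ norm_le_pi_norm w s')) (h0 s s')
    _ = ‖w‖ := by rw [← Finset.sum_mul, h1, one_mul]

lemma stoch_pow {S : Type*} [Fintype S] [DecidableEq S] (M : Matrix S S ℝ)
    (h0 : ∀ s s', 0 ≤ M s s') (h1 : ∀ s, ∑ s', M s s' = 1) :
    ∀ n : ℕ, (∀ s s', 0 ≤ (M ^ n) s s') ∧ (∀ s, ∑ s', (M ^ n) s s' = 1) := by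
  intro n
  induction n with
  | zero =>
      refine ⟨fun s s' => ?_, fun s => ?_⟩
      · rw [pow_zero, Matrix.one_apply]; split <;> norm_num
      · rw [pow_zero]; simp [Matrix.one_apply]
  | succ n ih =>
      refine ⟨fun s s' => ?_, fun s => ?_⟩
      · rw [pow_succ, Matrix.mul_apply]
        exact Finset.sum_nonneg fun s'' _ => mul_nonneg (ih.1 s s'') (h0 s'' s')
      · rw [pow_succ]
        simp only [Matrix.mul_apply]
        rw [Finset.sum_comm]
        simp only [← Finset.mul_sum]
        simp only [h1, mul_one]
        exact ih.2 s

lemma stoch_entry_le_one {S : Type*} [Fintype S] (M : Matrix S S ℝ)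
    (h0 : ∀ s s', 0 ≤ M s s') (h1 : ∀ s, ∑ s', M s s' = 1) (s s' : S) :
    M s s' ≤ 1 := by
  rw [← h1 s]
  exact Finset.single_le_sum (fun i _ => h0 s i) (Finset.mem_univ s')

lemma lam_tail {lam : ℝ} (h0 : 0 ≤ lam) (h1 : lam < 1) (k : ℕ) :
    (∑' t : ℕ, if k ≤ t then lam ^ t else 0) = lam ^ k * (1 - lam)⁻¹ := by
  have hinj : Function.Injective (fun n : ℕ => n + k) := fun a b h => by simpa using h
  have hsupp : Function.support (fun t : ℕ => if k ≤ t then lam ^ t else 0)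
      ⊆ Set.range (fun n : ℕ => n + k) := by
    intro t ht
    simp only [Function.mem_support] at ht
    by_cases h : k ≤ t
    · exact ⟨t - k, by simp; omega⟩
    · simp [h] at ht
  rw [← hinj.tsum_eq hsupp]
  simp only [Nat.le_add_left, if_true, pow_add]
  rw [tsum_mul_right, tsum_geometric_of_lt_one h0 h1, mul_comm]

lemma bellman_iterate {S : Type*} [Fintype S] [DecidableEq S] (Pπ : Matrix S S ℝ) (rπ : S → ℝ) (γ : ℝ)
    (B : (S → ℝ) → (S → ℝ)) (hB : ∀ v, B v = rπ + γ • Pπ.mulVec v) :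
    ∀ n (v : S → ℝ), B^[n] v
      = (∑ k ∈ Finset.range n, γ ^ k • (Pπ ^ k).mulVec rπ) + γ ^ n • (Pπ ^ n).mulVec v := by
  intro n
  induction n with
  | zero => intro v; simp [Matrix.one_mulVec]
  | succ n ih =>
      intro v
      rw [Function.iterate_succ_apply', ih v, hB]
      have expand : Pπ.mulVec ((∑ k ∈ Finset.range n, γ ^ k • (Pπ ^ k).mulVec rπ)
            + γ ^ n • (Pπ ^ n).mulVec v)
          = (∑ k ∈ Finset.range n, γ ^ k • (Pπ ^ (k + 1)).mulVec rπ)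
            + γ ^ n • (Pπ ^ (n + 1)).mulVec v := by
        simp only [← Matrix.mulVecLin_apply, map_add, map_smul, map_sum]
        simp only [Matrix.mulVecLin_apply, Matrix.mulVec_mulVec, ← pow_succ']
      rw [expand]
      rw [Finset.sum_range_succ' (fun k => γ ^ k • (Pπ ^ k).mulVec rπ)]
      simp only [pow_zero, one_smul, Matrix.one_mulVec, pow_zero]
      rw [smul_add, Finset.smul_sum]
      simp only [smul_smul, ← pow_succ']
      abel

set_option maxHeartbeats 1000000 in
/-- The λ-Bellman operator `B_π^{(λ)} v = (1-λ) ∑_t λ^t (B_π)^{t+1} v` is given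
by a convergent series and satisfies `B_π^{(λ)} v = r_π^{(λ)} + γ̃ P_π^{(λ)} v`,
where `γ̃ = γ(1-λ)/(1-γλ)`, `P_π^{(λ)} = (1-γλ) ∑_t (γλ)^t P_π^{t+1}` and
`r_π^{(λ)} = ∑_t (γλ)^t P_π^t r_π`. -/
theorem lambda_bellman_operator
    {S A : Type*} [Fintype S] [Nonempty S] [DecidableEq S] [Fintype A] [Nonempty A]
    (P : S → A → S → ℝ)
    (hP0 : ∀ s a s', 0 ≤ P s a s')
    (hP1 : ∀ s a, ∑ s', P s a s' = 1)
    (r : S → A → S → ℝ)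
    (γ : ℝ) (hγ0 : 0 < γ) (hγ1 : γ < 1)
    (π : S → A → ℝ)
    (hπ0 : ∀ s a, 0 ≤ π s a)
    (hπ1 : ∀ s, ∑ a, π s a = 1)
    (Pπ : Matrix S S ℝ)
    (hPπ : ∀ s s', Pπ s s' = ∑ a, π s a * P s a s')
    (rπ : S → ℝ)
    (hrπ : ∀ s, rπ s = ∑ a, ∑ s', π s a * (P s a s' * r s a s'))
    (B : (S → ℝ) → (S → ℝ))
    (hB : ∀ v, B v = rπ + γ • Pπ.mulVec v)
    (lam : ℝ) (hlam0 : 0 < lam) (hlam1 : lam < 1)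
    (tγ : ℝ) (htγ : tγ = γ * (1 - lam) / (1 - γ * lam))
    (Plam : Matrix S S ℝ)
    (hPlam : Plam = (1 - γ * lam) • ∑' t : ℕ, (γ * lam) ^ t • Pπ ^ (t + 1))
    (rlam : S → ℝ)
    (hrlam : rlam = ∑' t : ℕ, (γ * lam) ^ t • (Pπ ^ t).mulVec rπ) :
    ∀ v : S → ℝ,
      Summable (fun t : ℕ => lam ^ t • B^[t + 1] v) ∧
      (1 - lam) • (∑' t : ℕ, lam ^ t • B^[t + 1] v) = rlam + tγ • Plam.mulVec v := by
  intro v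
  -- basic positivity facts
  have hgl0 : (0:ℝ) ≤ γ * lam := by positivity
  have hgl1 : γ * lam < 1 := by nlinarith
  have h1mgl : (1:ℝ) - γ * lam ≠ 0 := by nlinarith
  have h1mlam : (1:ℝ) - lam ≠ 0 := by nlinarith
  -- Pπ is row-stochastic
  have hrow0 : ∀ s s', 0 ≤ Pπ s s' := fun s s' => by
    rw [hPπ]; exact Finset.sum_nonneg fun a _ => mul_nonneg (hπ0 s a) (hP0 s a s')
  have hrow1 : ∀ s, ∑ s', Pπ s s' = 1 := by
    intro s
    simp only [hPπ]
    rw [Finset.sum_comm]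
    simp only [← Finset.mul_sum, hP1, mul_one]
    exact hπ1 s
  have hpow := stoch_pow Pπ hrow0 hrow1
  have hPb : ∀ (n : ℕ) (w : S → ℝ), ‖(Pπ ^ n).mulVec w‖ ≤ ‖w‖ :=
    fun n w => stoch_mulVec_norm_le _ (hpow n).1 (hpow n).2 w
  have hiter := bellman_iterate Pπ rπ γ B hB
  have hgeomγ : Summable (fun k : ℕ => γ ^ k) := summable_geometric_of_lt_one hγ0.le hγ1
  have hpartial : ∀ n : ℕ, ∑ k ∈ Finset.range n, γ ^ k ≤ (1 - γ)⁻¹ := by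
    intro n
    calc ∑ k ∈ Finset.range n, γ ^ k ≤ ∑' k : ℕ, γ ^ k :=
          Summable.sum_le_tsum _ (fun k _ => pow_nonneg hγ0.le k) hgeomγ
      _ = (1 - γ)⁻¹ := tsum_geometric_of_lt_one hγ0.le hγ1
  -- norm bound on iterates
  set C : ℝ := ‖rπ‖ * (1 - γ)⁻¹ + ‖v‖ with hC
  have hsumnorm : ∀ n : ℕ, ‖∑ k ∈ Finset.range n, γ ^ k • (Pπ ^ k).mulVec rπ‖ ≤ ‖rπ‖ * (1 - γ)⁻¹ := by
    intro n
    calc ‖∑ k ∈ Finset.range n, γ ^ k • (Pπ ^ k).mulVec rπ‖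
        ≤ ∑ k ∈ Finset.range n, ‖γ ^ k • (Pπ ^ k).mulVec rπ‖ := norm_sum_le _ _
      _ ≤ ∑ k ∈ Finset.range n, γ ^ k * ‖rπ‖ := by
          refine Finset.sum_le_sum fun k _ => ?_
          rw [norm_smul, Real.norm_eq_abs, abs_of_nonneg (pow_nonneg hγ0.le k)]
          exact mul_le_mul_of_nonneg_left (hPb k rπ) (pow_nonneg hγ0.le k)
      _ = (∑ k ∈ Finset.range n, γ ^ k) * ‖rπ‖ := (Finset.sum_mul _ _ _).symm
      _ ≤ (1 - γ)⁻¹ * ‖rπ‖ := mul_le_mul_of_nonneg_right (hpartial n) (norm_nonneg _)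
      _ = ‖rπ‖ * (1 - γ)⁻¹ := mul_comm _ _
  have hBnorm : ∀ t : ℕ, ‖B^[t + 1] v‖ ≤ C := by
    intro t
    rw [hiter (t + 1) v]
    have h2 : ‖γ ^ (t + 1) • (Pπ ^ (t + 1)).mulVec v‖ ≤ ‖v‖ := by
      rw [norm_smul, Real.norm_eq_abs, abs_of_nonneg (pow_nonneg hγ0.le _)]
      calc γ ^ (t + 1) * ‖(Pπ ^ (t + 1)).mulVec v‖ ≤ 1 * ‖v‖ :=
            mul_le_mul (pow_le_one₀ hγ0.le hγ1.le) (hPb _ v) (norm_nonneg _) zero_le_one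
        _ = ‖v‖ := one_mul _
    calc ‖_ + _‖ ≤ ‖∑ k ∈ Finset.range (t + 1), γ ^ k • (Pπ ^ k).mulVec rπ‖
          + ‖γ ^ (t + 1) • (Pπ ^ (t + 1)).mulVec v‖ := norm_add_le _ _
      _ ≤ ‖rπ‖ * (1 - γ)⁻¹ + ‖v‖ := add_le_add (hsumnorm (t + 1)) h2
  -- summability of the main series
  have hsum1 : Summable (fun t : ℕ => lam ^ t • B^[t + 1] v) := by
    refine Summable.of_norm_bounded (g := fun t : ℕ => C * lam ^ t)
      ((summable_geometric_of_lt_one hlam0.le hlam1).mul_left C) fun t => ?_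
    beta_reduce
    rw [norm_smul, Real.norm_eq_abs, abs_of_nonneg (pow_nonneg hlam0.le t), mul_comm C]
    exact mul_le_mul_of_nonneg_left (hBnorm t) (pow_nonneg hlam0.le t)
  refine ⟨hsum1, ?_⟩
  funext s
  -- scalar abbreviations
  set b : ℕ → ℝ := fun k => ((Pπ ^ k).mulVec rπ) s with hbdef
  set w : ℕ → ℝ := fun t => ((Pπ ^ t).mulVec v) s with hwdef
  have hbb : ∀ k, |b k| ≤ ‖rπ‖ := fun k =>
    le_trans (Real.norm_eq_abs _ ▸ norm_le_pi_norm ((Pπ ^ k).mulVec rπ) s) (hPb k rπ)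
  have hww : ∀ t, |w t| ≤ ‖v‖ := fun t =>
    le_trans (Real.norm_eq_abs _ ▸ norm_le_pi_norm ((Pπ ^ t).mulVec v) s) (hPb t v)
  set c1 : ℕ → ℝ := fun t => lam ^ t * ∑ k ∈ Finset.range (t + 1), γ ^ k * b k with hc1def
  set c2 : ℕ → ℝ := fun t => lam ^ t * (γ ^ (t + 1) * w (t + 1)) with hc2def
  have hgs : ∀ t, (lam ^ t • B^[t + 1] v) s = c1 t + c2 t := by
    intro t
    rw [Pi.smul_apply, smul_eq_mul, hiter (t + 1) v]
    simp only [Pi.add_apply, Finset.sum_apply, Pi.smul_apply, smul_eq_mul, mul_add, hc1def,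
      hc2def, hbdef, hwdef]
  have hscal : ∀ n : ℕ, |∑ k ∈ Finset.range n, γ ^ k * b k| ≤ ‖rπ‖ * (1 - γ)⁻¹ := by
    intro n
    calc |∑ k ∈ Finset.range n, γ ^ k * b k| ≤ ∑ k ∈ Finset.range n, |γ ^ k * b k| :=
          Finset.abs_sum_le_sum_abs _ _
      _ ≤ ∑ k ∈ Finset.range n, γ ^ k * ‖rπ‖ := by
          refine Finset.sum_le_sum fun k _ => ?_
          rw [abs_mul, abs_of_nonneg (pow_nonneg hγ0.le k)]
          exact mul_le_mul_of_nonneg_left (hbb k) (pow_nonneg hγ0.le k)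
      _ = (∑ k ∈ Finset.range n, γ ^ k) * ‖rπ‖ := (Finset.sum_mul _ _ _).symm
      _ ≤ (1 - γ)⁻¹ * ‖rπ‖ := mul_le_mul_of_nonneg_right (hpartial n) (norm_nonneg _)
      _ = ‖rπ‖ * (1 - γ)⁻¹ := mul_comm _ _
  have hc1 : Summable c1 := by
    refine Summable.of_norm_bounded (g := fun t : ℕ => (‖rπ‖ * (1 - γ)⁻¹) * lam ^ t)
      ((summable_geometric_of_lt_one hlam0.le hlam1).mul_left _) fun t => ?_
    beta_reduce
    rw [Real.norm_eq_abs, hc1def, abs_mul, abs_of_nonneg (pow_nonneg hlam0.le t), mul_comm _ (lam ^ t)]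
    exact mul_le_mul_of_nonneg_left (hscal (t + 1)) (pow_nonneg hlam0.le t)
  have hc2 : Summable c2 := by
    refine Summable.of_norm_bounded (g := fun t : ℕ => (γ * ‖v‖) * (γ * lam) ^ t)
      ((summable_geometric_of_lt_one hgl0 hgl1).mul_left _) fun t => ?_
    beta_reduce
    rw [Real.norm_eq_abs, hc2def, abs_mul, abs_mul, abs_of_nonneg (pow_nonneg hlam0.le t),
      abs_of_nonneg (pow_nonneg hγ0.le (t + 1))]
    have : lam ^ t * (γ ^ (t + 1) * |w (t + 1)|) ≤ lam ^ t * (γ ^ (t + 1) * ‖v‖) := by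
      refine mul_le_mul_of_nonneg_left (mul_le_mul_of_nonneg_left (hww (t + 1))
        (pow_nonneg hγ0.le _)) (pow_nonneg hlam0.le t)
    calc lam ^ t * (γ ^ (t + 1) * |w (t + 1)|) ≤ lam ^ t * (γ ^ (t + 1) * ‖v‖) := this
      _ = (γ * ‖v‖) * (γ * lam) ^ t := by rw [mul_pow, pow_succ]; ring
  -- split the tsum
  have hsplit : (∑' t : ℕ, (lam ^ t • B^[t + 1] v) s) = (∑' t, c1 t) + ∑' t, c2 t := by
    rw [tsum_congr hgs]
    exact Summable.tsum_add hc1 hc2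
  -- LHS
  rw [Pi.smul_apply, smul_eq_mul, tsum_apply hsum1, hsplit, mul_add]
  rw [Pi.add_apply, Pi.smul_apply, smul_eq_mul]
  -- matrix series summability
  have hentry : ∀ (t : ℕ) (s1 s2 : S), |(Pπ ^ t) s1 s2| ≤ 1 := by
    intro t s1 s2
    rw [abs_of_nonneg ((hpow t).1 s1 s2)]
    exact stoch_entry_le_one _ (hpow t).1 (hpow t).2 s1 s2
  have hentrysum : ∀ s1 s2 : S, Summable fun t : ℕ => (γ * lam) ^ t * (Pπ ^ (t + 1)) s1 s2 := by
    intro s1 s2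
    refine Summable.of_norm_bounded (g := fun t : ℕ => (γ * lam) ^ t)
      (summable_geometric_of_lt_one hgl0 hgl1) fun t => ?_
    beta_reduce
    rw [Real.norm_eq_abs, abs_mul, abs_of_nonneg (pow_nonneg hgl0 t)]
    calc (γ * lam) ^ t * |(Pπ ^ (t + 1)) s1 s2| ≤ (γ * lam) ^ t * 1 :=
          mul_le_mul_of_nonneg_left (hentry (t + 1) s1 s2) (pow_nonneg hgl0 t)
      _ = (γ * lam) ^ t := mul_one _
  have hMsum : Summable (fun t : ℕ => (γ * lam) ^ t • Pπ ^ (t + 1)) := by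
    apply Pi.summable.mpr
    intro s1
    apply Pi.summable.mpr
    intro s2
    exact (hentrysum s1 s2).congr fun t => by simp [Matrix.smul_apply, mul_comm]
  have hPlam_apply : ∀ s1 s2, Plam s1 s2
      = (1 - γ * lam) * ∑' t : ℕ, (γ * lam) ^ t * (Pπ ^ (t + 1)) s1 s2 := by
    intro s1 s2
    rw [hPlam, Matrix.smul_apply, smul_eq_mul]
    congr 1
    erw [tsum_apply hMsum, tsum_apply (Pi.summable.mp hMsum s1)]
    exact tsum_congr fun t => by simp [Matrix.smul_apply]
  -- Key 2 : the c2 part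
  have hmulvec : Plam.mulVec v s = (1 - γ * lam) * ∑' t : ℕ, (γ * lam) ^ t * w (t + 1) := by
    have h1 : Plam.mulVec v s = ∑ s', Plam s s' * v s' := rfl
    rw [h1]
    have h2 : ∀ s', Plam s s' * v s'
        = (1 - γ * lam) * ∑' t : ℕ, (γ * lam) ^ t * (Pπ ^ (t + 1)) s s' * v s' := by
      intro s'
      rw [hPlam_apply s s', mul_assoc, ← tsum_mul_right]
    simp only [h2]
    rw [← Finset.mul_sum]
    congr 1
    rw [← Summable.tsum_finsetSum (fun s' _ => ((hentrysum s s').mul_right (v s')))]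
    refine tsum_congr fun t => ?_
    have : ∀ s', (γ * lam) ^ t * (Pπ ^ (t + 1)) s s' * v s'
        = (γ * lam) ^ t * ((Pπ ^ (t + 1)) s s' * v s') := fun s' => by ring
    simp only [this, ← Finset.mul_sum]
    rfl
  have key2 : (1 - lam) * ∑' t, c2 t = tγ * Plam.mulVec v s := by
    have hc2' : ∀ t, c2 t = γ * ((γ * lam) ^ t * w (t + 1)) := by
      intro t; rw [hc2def]; simp only; rw [mul_pow, pow_succ]; ring
    rw [tsum_congr hc2', tsum_mul_left, hmulvec, htγ]
    rw [← mul_assoc (γ * (1 - lam) / (1 - γ * lam)), div_mul_cancel₀ _ h1mgl]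
    ring
  -- Key 1 : the c1 part
  have hrsum : Summable (fun t : ℕ => (γ * lam) ^ t • (Pπ ^ t).mulVec rπ) := by
    refine Summable.of_norm_bounded (g := fun t : ℕ => ‖rπ‖ * (γ * lam) ^ t)
      ((summable_geometric_of_lt_one hgl0 hgl1).mul_left _) fun t => ?_
    beta_reduce
    rw [norm_smul, Real.norm_eq_abs, abs_of_nonneg (pow_nonneg hgl0 t), mul_comm ‖rπ‖]
    exact mul_le_mul_of_nonneg_left (hPb t rπ) (pow_nonneg hgl0 t)
  have hrlam_s : rlam s = ∑' k : ℕ, (γ * lam) ^ k * b k := by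
    rw [hrlam, tsum_apply hrsum]
    exact tsum_congr fun k => by rw [Pi.smul_apply, smul_eq_mul, hbdef]
  set f : ℕ → ℕ → ℝ := fun t k => if k ≤ t then lam ^ t * (γ ^ k * b k) else 0 with hfdef
  have hF : Summable (Function.uncurry f) := by
    refine Summable.of_norm_bounded (g := fun p : ℕ × ℕ => lam ^ p.1 * (γ ^ p.2 * ‖rπ‖))
      (Summable.mul_of_nonneg (summable_geometric_of_lt_one hlam0.le hlam1)
        (hgeomγ.mul_right ‖rπ‖) (fun t => pow_nonneg hlam0.le t)
        (fun k => mul_nonneg (pow_nonneg hγ0.le k) (norm_nonneg _))) fun p => ?_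
    beta_reduce
    rw [Real.norm_eq_abs]
    rcases p with ⟨t, k⟩
    simp only [Function.uncurry, hfdef]
    split
    · rw [abs_mul, abs_mul, abs_of_nonneg (pow_nonneg hlam0.le t), abs_of_nonneg (pow_nonneg hγ0.le k)]
      exact mul_le_mul_of_nonneg_left (mul_le_mul_of_nonneg_left (hbb k) (pow_nonneg hγ0.le k))
        (pow_nonneg hlam0.le t)
    · simp only [abs_zero]
      positivity
  have hinner : ∀ t : ℕ, (∑' k : ℕ, f t k) = c1 t := by
    intro t
    rw [tsum_eq_sum (s := Finset.range (t + 1)) (fun k hk => by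
      rw [hfdef]; simp only; rw [if_neg]; simpa using hk)]
    rw [hc1def]
    simp only
    rw [Finset.mul_sum]
    refine Finset.sum_congr rfl fun k hk => ?_
    rw [hfdef]
    simp only
    rw [if_pos (by simpa [Nat.lt_succ_iff] using hk)]
  have houter : ∀ k : ℕ, (∑' t : ℕ, f t k) = lam ^ k * (1 - lam)⁻¹ * (γ ^ k * b k) := by
    intro k
    have : ∀ t, f t k = (if k ≤ t then lam ^ t else 0) * (γ ^ k * b k) := by
      intro t; rw [hfdef]; simp only; split <;> simp
    rw [tsum_congr this, tsum_mul_right, lam_tail hlam0.le hlam1 k]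
  have key1 : (1 - lam) * ∑' t, c1 t = rlam s := by
    have hswap : (∑' t : ℕ, ∑' k : ℕ, f t k) = ∑' k : ℕ, ∑' t : ℕ, f t k := (Summable.tsum_comm hF).symm
    rw [← tsum_congr hinner, hswap, tsum_congr houter, hrlam_s, ← tsum_mul_left]
    refine tsum_congr fun k => ?_
    rw [mul_pow]
    field_simp
  rw [key1, key2]
end

section
/- The value vector v_π is a fixed point of the λ-Bellman operator: for every λ ∈ (0,1), v_π = r_π^{(λ)} + γ̃ · P_π^{(λ)} v_π, where γ̃ = γ(1-λ)/(1-γλ), P_π^{(λ)} = (1-γλ) Σ_{t=0}^∞ (γλ)^t P_π^{t+1}, and r_π^{(λ)} = Σ_{t=0}^∞ (γλ)^t P_π^t r_π (the λ-return version of the Bellman equation). -/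
/-! Write `N_d = ∑ (d • P_π)^t`, a convergent series since `P_π` is row stochastic; it is a
two-sided inverse of `1 - d • P_π`. Then `v_π = N_γ r_π`, `r_π^{(λ)} = N_{γλ} r_π`,
`P_π^{(λ)} = (1 - γλ) N_{γλ} P_π` and `γ̃ (1 - γλ) = γ - γλ`, so the claim is the resolvent
identity `N_γ = N_{γλ} + (γ - γλ) N_{γλ} P_π N_γ`. -/

open Matrix

theorem Summable.tsum_mulVec {ι m n R : Type*} [Fintype n] [NonUnitalNonAssocSemiring R]
    [TopologicalSpace R] [IsTopologicalSemiring R] [T2Space R] {f : ι → Matrix m n R}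
    (hf : Summable f) (v : n → R) : (∑' i, f i) *ᵥ v = ∑' i, f i *ᵥ v :=
  hf.map_tsum (mulVec.addMonoidHomLeft v) (continuous_id.matrix_mulVec continuous_const)

namespace Matrix

variable {n : Type*} [Fintype n] [DecidableEq n]

theorem of_sum_mul_mem_rowStochastic {R A : Type*} [Semiring R] [PartialOrder R] [IsOrderedRing R]
    [Fintype A] {P : n → A → n → R} (hP0 : ∀ s a s', 0 ≤ P s a s')
    (hP1 : ∀ s a, ∑ s', P s a s' = 1) {π : n → A → R} (hπ0 : ∀ s a, 0 ≤ π s a)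
    (hπ1 : ∀ s, ∑ a, π s a = 1) :
    of (fun s s' => ∑ a, π s a * P s a s') ∈ rowStochastic R n := by
  refine mem_rowStochastic_iff_sum.2 ⟨fun s s' => ?_, fun s => ?_⟩
  · exact Finset.sum_nonneg fun a _ => mul_nonneg (hπ0 s a) (hP0 s a s')
  · simp only [of_apply]
    rw [Finset.sum_comm]
    simp_rw [← Finset.mul_sum, hP1, mul_one, hπ1]

theorem summable_smul_pow_of_mem_rowStochastic {M : Matrix n n ℝ} (hM : M ∈ rowStochastic ℝ n)
    {c : ℝ} (hc : |c| < 1) : Summable fun t : ℕ => (c • M) ^ t := by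
  refine Pi.summable.2 fun i => Pi.summable.2 fun j => ?_
  refine (summable_geometric_of_lt_one (abs_nonneg c) hc).of_norm_bounded fun t => ?_
  have hMt := pow_mem hM t
  rw [smul_pow, smul_apply, smul_eq_mul, norm_mul, norm_pow, Real.norm_eq_abs,
    Real.norm_of_nonneg (nonneg_of_mem_rowStochastic hMt)]
  exact mul_le_of_le_one_right (by positivity) (le_one_of_mem_rowStochastic hMt)

theorem tsum_pow_smul_mulVec {R : Type*} [CommSemiring R] [TopologicalSpace R]
    [IsTopologicalSemiring R] [T2Space R] {M : Matrix n n R} {c : R}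
    (hM : Summable fun t : ℕ => (c • M) ^ t) (v : n → R) :
    ∑' t : ℕ, c ^ t • (M ^ t) *ᵥ v = (∑' t : ℕ, (c • M) ^ t) *ᵥ v := by
  simp_rw [hM.tsum_mulVec, smul_pow, smul_mulVec]

end Matrix

theorem resolvent_identity {𝕜 R : Type*} [CommRing 𝕜] [Ring R] [Algebra 𝕜 R]
    {x a b : R} {c g : 𝕜} (ha : a * (1 - c • x) = 1) (hb : (1 - g • x) * b = 1) :
    b = a + (g - c) • (a * x * b) :=
  calc b = a * (1 - c • x) * b := by rw [ha, one_mul]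
    _ = a * ((1 - g • x) * b) + (g - c) • (a * x * b) := by
      simp only [sub_smul, sub_mul, mul_sub, smul_mul_assoc, mul_smul_comm, one_mul, mul_one,
        mul_assoc]
      abel
    _ = a + (g - c) • (a * x * b) := by rw [hb, mul_one]

theorem lambda_return_bellman_equation_general
    {S A : Type*} [Fintype S] [DecidableEq S] [Fintype A]
    (P : S → A → S → ℝ)
    (hP0 : ∀ s a s', 0 ≤ P s a s')
    (hP1 : ∀ s a, ∑ s', P s a s' = 1)
    (γ : ℝ) (hγ0 : 0 < γ) (hγ1 : γ < 1)
    (π : S → A → ℝ)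
    (hπ0 : ∀ s a, 0 ≤ π s a)
    (hπ1 : ∀ s, ∑ a, π s a = 1)
    (Pπ : Matrix S S ℝ)
    (hPπ : ∀ s s', Pπ s s' = ∑ a, π s a * P s a s')
    (rπ : S → ℝ)
    (vπ : S → ℝ)
    (hvπ : vπ = ∑' t : ℕ, γ ^ t • (Pπ ^ t).mulVec rπ)
    (lam : ℝ) (hlam0 : 0 < lam) (hlam1 : lam < 1)
    (tγ : ℝ) (htγ : tγ = γ * (1 - lam) / (1 - γ * lam))
    (Plam : Matrix S S ℝ)
    (hPlam : Plam = (1 - γ * lam) • ∑' t : ℕ, (γ * lam) ^ t • Pπ ^ (t + 1))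
    (rlam : S → ℝ)
    (hrlam : rlam = ∑' t : ℕ, (γ * lam) ^ t • (Pπ ^ t).mulVec rπ) :
    vπ = rlam + tγ • Plam.mulVec vπ := by
  set c := γ * lam
  have hPπ_stoch : Pπ ∈ rowStochastic ℝ S := by
    convert of_sum_mul_mem_rowStochastic hP0 hP1 hπ0 hπ1
    exact ext hPπ
  have hc0 : 0 < c := by positivity
  have hc1 : c < 1 := by nlinarith
  have hsumγ := summable_smul_pow_of_mem_rowStochastic hPπ_stoch <| abs_lt.2 ⟨by linarith, hγ1⟩
  have hsumc := summable_smul_pow_of_mem_rowStochastic hPπ_stoch <| abs_lt.2 ⟨by linarith, hc1⟩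
  have hPlam' : Plam = (1 - c) • ((∑' t : ℕ, (c • Pπ) ^ t) * Pπ) := by
    rw [hPlam, ← hsumc.tsum_mul_right]
    simp_rw [smul_pow, smul_mul_assoc, ← pow_succ]
  have hresolvent := resolvent_identity hsumc.tsum_pow_mul_one_sub hsumγ.one_sub_mul_tsum_pow
  have htγ' : tγ * (1 - c) = γ - c := by
    have : 1 - c ≠ 0 := by linarith
    rw [htγ]; field_simp; ring
  rw [hvπ, hrlam, hPlam', tsum_pow_smul_mulVec hsumγ, tsum_pow_smul_mulVec hsumc, smul_mulVec,
    smul_smul, htγ', mulVec_mulVec, ← smul_mulVec, ← add_mulVec, ← hresolvent]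

/-- λ-return version of the Bellman equation: the value vector `v_π` is a fixed
point of the λ-Bellman operator, i.e. `v_π = r_π^{(λ)} + γ̃ P_π^{(λ)} v_π`. -/
theorem lambda_return_bellman_equation
    {S A : Type*} [Fintype S] [Nonempty S] [DecidableEq S] [Fintype A] [Nonempty A]
    (P : S → A → S → ℝ)
    (hP0 : ∀ s a s', 0 ≤ P s a s')
    (hP1 : ∀ s a, ∑ s', P s a s' = 1)
    (r : S → A → S → ℝ)
    (γ : ℝ) (hγ0 : 0 < γ) (hγ1 : γ < 1)
    (π : S → A → ℝ)
    (hπ0 : ∀ s a, 0 ≤ π s a)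
    (hπ1 : ∀ s, ∑ a, π s a = 1)
    (Pπ : Matrix S S ℝ)
    (hPπ : ∀ s s', Pπ s s' = ∑ a, π s a * P s a s')
    (rπ : S → ℝ)
    (hrπ : ∀ s, rπ s = ∑ a, ∑ s', π s a * (P s a s' * r s a s'))
    (vπ : S → ℝ)
    (hvπ : vπ = ∑' t : ℕ, γ ^ t • (Pπ ^ t).mulVec rπ)
    (lam : ℝ) (hlam0 : 0 < lam) (hlam1 : lam < 1)
    (tγ : ℝ) (htγ : tγ = γ * (1 - lam) / (1 - γ * lam))
    (Plam : Matrix S S ℝ)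
    (hPlam : Plam = (1 - γ * lam) • ∑' t : ℕ, (γ * lam) ^ t • Pπ ^ (t + 1))
    (rlam : S → ℝ)
    (hrlam : rlam = ∑' t : ℕ, (γ * lam) ^ t • (Pπ ^ t).mulVec rπ) :
    vπ = rlam + tγ • Plam.mulVec vπ :=
  lambda_return_bellman_equation_general P hP0 hP1 γ hγ0 hγ1 π hπ0 hπ1 Pπ hPπ rπ vπ hvπ lam hlam0
    hlam1 tγ htγ Plam hPlam rlam hrlam
end

section
/- For every λ ∈ (0,1), the λ-version discounted state distribution d_π^{λ} is a probability distribution on S (nonnegative entries summing to 1) and admits the matrix form d_π^{λ} = (1-γ̃) · ((I - γ̃ P_π^{(λ)})^{-1})^T ρ0, i.e., d_π^{λ}[s] = (1-γ̃) Σ_{s0} ρ0(s0) ((I - γ̃ P_π^{(λ)})^{-1})[s0,s]. -/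
/-!
For the ℓ∞-operator norm a row-stochastic matrix `M` has norm at most `1`, so for `0 ≤ c < 1`
the Neumann series `∑ cᵗ Mᵗ` converges to `(1 - c M)⁻¹`, whose entries are nonnegative and whose
row sums are `(1 - c)⁻¹`. Hence `(1 - c) (1 - c M)⁻¹` is row-stochastic. Applied to `P_π` this shows
that `P_π^{(λ)} = (1 - γλ) (1 - γλ P_π)⁻¹ P_π` is row-stochastic; applied to `P_π^{(λ)}` and pushed
through `ρ0ᵀ`, it identifies `d_π^λ` with `ρ0ᵀ (1 - γ̃) (1 - γ̃ P_π^{(λ)})⁻¹`, a probability vector.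
-/

open Finset

open Matrix in
theorem HasSum.matrix_vecMul {ι m n R : Type*} [Fintype m] [NonUnitalNonAssocSemiring R]
    [TopologicalSpace R] [IsTopologicalSemiring R] {f : ι → Matrix m n R} {A : Matrix m n R}
    (h : HasSum f A) (v : m → R) : HasSum (fun t => v ᵥ* f t) (v ᵥ* A) :=
  Pi.hasSum.2 fun j => hasSum_sum fun i _ => (Pi.hasSum.1 (Pi.hasSum.1 h i) j).mul_left (v i)

namespace Matrix

variable {n : Type*} [Fintype n] [DecidableEq n]

section linftyOp

attribute [local instance] Matrix.linftyOpNormedRing Matrix.linftyOpNormedAlgebra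

lemma linfty_opNorm_le_one_of_mem_rowStochastic {M : Matrix n n ℝ}
    (hM : M ∈ rowStochastic ℝ n) : ‖M‖ ≤ 1 := by
  rw [linfty_opNorm_def, ← NNReal.coe_one, NNReal.coe_le_coe]
  refine Finset.sup_le fun i _ => ?_
  rw [← NNReal.coe_le_coe, NNReal.coe_sum]
  simp [Real.norm_of_nonneg (hM.1 i _), sum_row_of_mem_rowStochastic hM i]

lemma linfty_opNorm_smul_lt_one_of_mem_rowStochastic {M : Matrix n n ℝ}
    (hM : M ∈ rowStochastic ℝ n) {c : ℝ} (hc0 : 0 ≤ c) (hc1 : c < 1) : ‖c • M‖ < 1 :=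
  calc ‖c • M‖ ≤ ‖c‖ * ‖M‖ := norm_smul_le c M
    _ ≤ c * 1 := by
      rw [Real.norm_of_nonneg hc0]
      exact mul_le_mul_of_nonneg_left (linfty_opNorm_le_one_of_mem_rowStochastic hM) hc0
    _ < 1 := by linarith

lemma isUnit_det_one_sub_smul_of_mem_rowStochastic {M : Matrix n n ℝ}
    (hM : M ∈ rowStochastic ℝ n) {c : ℝ} (hc0 : 0 ≤ c) (hc1 : c < 1) :
    IsUnit (1 - c • M).det :=
  (isUnit_iff_isUnit_det _).1
    (isUnit_one_sub_of_norm_lt_one (linfty_opNorm_smul_lt_one_of_mem_rowStochastic hM hc0 hc1))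

end linftyOp

lemma hasSum_geometric_smul_pow_of_mem_rowStochastic {M : Matrix n n ℝ}
    (hM : M ∈ rowStochastic ℝ n) {c : ℝ} (hc0 : 0 ≤ c) (hc1 : c < 1) :
    HasSum (fun t : ℕ => c ^ t • M ^ t) (1 - c • M)⁻¹ := by
  -- the ℓ∞-operator norm induces the product topology, so this `HasSum` is the usual one
  let := Matrix.linftyOpNormedRing (n := n) (α := ℝ)
  let := Matrix.linftyOpNormedAlgebra (n := n) (α := ℝ) (R := ℝ)
  have h := hasSum_geom_series_inverse (c • M)
    (linfty_opNorm_smul_lt_one_of_mem_rowStochastic hM hc0 hc1)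
  simp only [smul_pow, ← nonsing_inv_eq_ringInverse] at h
  exact h

lemma one_sub_smul_inv_one_sub_smul_mem_rowStochastic {M : Matrix n n ℝ}
    (hM : M ∈ rowStochastic ℝ n) {c : ℝ} (hc0 : 0 ≤ c) (hc1 : c < 1) :
    (1 - c) • (1 - c • M)⁻¹ ∈ rowStochastic ℝ n := by
  have hsum := hasSum_geometric_smul_pow_of_mem_rowStochastic hM hc0 hc1
  refine ⟨fun i j => ?_, ?_⟩
  · have hij : HasSum (fun t : ℕ => (c ^ t • M ^ t) i j) ((1 - c • M)⁻¹ i j) :=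
      Pi.hasSum.1 (Pi.hasSum.1 hsum i) j
    exact mul_nonneg (by linarith)
      (hij.nonneg fun t => mul_nonneg (pow_nonneg hc0 t) ((pow_mem hM t).1 i j))
  · have hfix : (1 - c • M) *ᵥ 1 = (1 - c) • (1 : n → ℝ) := by
      rw [sub_mulVec, one_mulVec, smul_mulVec, hM.2, sub_smul, one_smul]
    rw [smul_mulVec, ← mulVec_smul, ← hfix, mulVec_mulVec,
      nonsing_inv_mul _ (isUnit_det_one_sub_smul_of_mem_rowStochastic hM hc0 hc1), one_mulVec]

lemma one_sub_smul_tsum_smul_pow_succ_mem_rowStochastic {M : Matrix n n ℝ}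
    (hM : M ∈ rowStochastic ℝ n) {c : ℝ} (hc0 : 0 ≤ c) (hc1 : c < 1) :
    (1 - c) • ∑' t : ℕ, c ^ t • M ^ (t + 1) ∈ rowStochastic ℝ n := by
  have hsum : HasSum (fun t : ℕ => c ^ t • M ^ (t + 1)) ((1 - c • M)⁻¹ * M) := by
    simpa only [pow_succ, smul_mul_assoc] using
      (hasSum_geometric_smul_pow_of_mem_rowStochastic hM hc0 hc1).mul_right M
  rw [hsum.tsum_eq, ← smul_mul_assoc]
  exact mul_mem (one_sub_smul_inv_one_sub_smul_mem_rowStochastic hM hc0 hc1) hM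

end Matrix

lemma policyTransition_mem_rowStochastic {S A : Type*} [Fintype S] [DecidableEq S] [Fintype A]
    {P : S → A → S → ℝ} (hP0 : ∀ s a s', 0 ≤ P s a s') (hP1 : ∀ s a, ∑ s', P s a s' = 1)
    {π : S → A → ℝ} (hπ0 : ∀ s a, 0 ≤ π s a) (hπ1 : ∀ s, ∑ a, π s a = 1) :
    Matrix.of (fun s s' => ∑ a, π s a * P s a s') ∈ Matrix.rowStochastic ℝ S := by
  refine Matrix.mem_rowStochastic_iff_sum.2
    ⟨fun s s' => sum_nonneg fun a _ => mul_nonneg (hπ0 s a) (hP0 s a s'), fun s => ?_⟩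
  simp only [Matrix.of_apply]
  rw [sum_comm]
  simp only [← mul_sum, hP1, mul_one, hπ1]

theorem lambda_discounted_state_distribution_general
    {S A : Type*} [Fintype S] [DecidableEq S] [Fintype A]
    (P : S → A → S → ℝ)
    (hP0 : ∀ s a s', 0 ≤ P s a s')
    (hP1 : ∀ s a, ∑ s', P s a s' = 1)
    (γ : ℝ) (hγ0 : 0 < γ) (hγ1 : γ < 1)
    (π : S → A → ℝ)
    (hπ0 : ∀ s a, 0 ≤ π s a)
    (hπ1 : ∀ s, ∑ a, π s a = 1)
    (Pπ : Matrix S S ℝ)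
    (hPπ : ∀ s s', Pπ s s' = ∑ a, π s a * P s a s')
    (lam : ℝ) (hlam0 : 0 < lam) (hlam1 : lam < 1)
    (tγ : ℝ) (htγ : tγ = γ * (1 - lam) / (1 - γ * lam))
    (Plam : Matrix S S ℝ)
    (hPlam : Plam = (1 - γ * lam) • ∑' t : ℕ, (γ * lam) ^ t • Pπ ^ (t + 1))
    (ρ0 : S → ℝ)
    (hρ0 : ∀ s, 0 ≤ ρ0 s)
    (hρ1 : ∑ s, ρ0 s = 1)
    (dlam : S → ℝ)
    (hdlam : ∀ s, dlam s = (1 - tγ) * ∑' t : ℕ, tγ ^ t * ∑ s0, ρ0 s0 * (Plam ^ t) s0 s) :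
    (∀ s, 0 ≤ dlam s) ∧
    (∑ s, dlam s = 1) ∧
    ∀ s, dlam s = (1 - tγ) * ∑ s0, ρ0 s0 * (1 - tγ • Plam)⁻¹ s0 s := by
  have hc0 : 0 ≤ γ * lam := by positivity
  have hc1 : γ * lam < 1 := by nlinarith
  have htγ0 : 0 ≤ tγ := by rw [htγ]; exact div_nonneg (by nlinarith) (by linarith)
  have htγ1 : tγ < 1 := by rw [htγ, div_lt_one (by linarith)]; nlinarith
  have hPπ_mem : Pπ ∈ Matrix.rowStochastic ℝ S :=
    (Matrix.ext hPπ).symm ▸ policyTransition_mem_rowStochastic hP0 hP1 hπ0 hπ1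
  have hPlam_mem : Plam ∈ Matrix.rowStochastic ℝ S :=
    hPlam ▸ Matrix.one_sub_smul_tsum_smul_pow_succ_mem_rowStochastic hPπ_mem hc0 hc1
  have hform : ∀ s, dlam s = (1 - tγ) * ∑ s0, ρ0 s0 * (1 - tγ • Plam)⁻¹ s0 s := by
    intro s
    have hrow : HasSum (fun t : ℕ => tγ ^ t * ∑ s0, ρ0 s0 * (Plam ^ t) s0 s)
        (∑ s0, ρ0 s0 * (1 - tγ • Plam)⁻¹ s0 s) := by
      simpa only [Matrix.vecMul, dotProduct, Matrix.smul_apply, smul_eq_mul, mul_sum,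
        mul_left_comm] using Pi.hasSum.1 ((Matrix.hasSum_geometric_smul_pow_of_mem_rowStochastic
          hPlam_mem htγ0 htγ1).matrix_vecMul ρ0) s
    rw [hdlam, hrow.tsum_eq]
  have hvec : dlam = Matrix.vecMul ρ0 ((1 - tγ) • (1 - tγ • Plam)⁻¹) := by
    funext s
    simp only [hform, Matrix.vecMul, dotProduct, Matrix.smul_apply, smul_eq_mul, mul_sum,
      mul_left_comm]
  have hstoch := Matrix.one_sub_smul_inv_one_sub_smul_mem_rowStochastic hPlam_mem htγ0 htγ1
  refine ⟨?_, ?_, hform⟩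
  · rw [hvec]
    exact Matrix.nonneg_vecMul_of_mem_rowStochastic hstoch hρ0
  · rw [← dotProduct_one, hvec]
    exact Matrix.vecMul_dotProduct_one_eq_one_rowStochastic hstoch (by rwa [dotProduct_one])

/-- The λ-version discounted state distribution `d_π^{λ}` is a probability
distribution on `S` and satisfies
`d_π^{λ}[s] = (1-γ̃) ∑_{s0} ρ0(s0) ((I - γ̃ P_π^{(λ)})⁻¹)[s0,s]`. -/
theorem lambda_discounted_state_distribution
    {S A : Type*} [Fintype S] [Nonempty S] [DecidableEq S] [Fintype A] [Nonempty A]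
    (P : S → A → S → ℝ)
    (hP0 : ∀ s a s', 0 ≤ P s a s')
    (hP1 : ∀ s a, ∑ s', P s a s' = 1)
    (γ : ℝ) (hγ0 : 0 < γ) (hγ1 : γ < 1)
    (π : S → A → ℝ)
    (hπ0 : ∀ s a, 0 ≤ π s a)
    (hπ1 : ∀ s, ∑ a, π s a = 1)
    (Pπ : Matrix S S ℝ)
    (hPπ : ∀ s s', Pπ s s' = ∑ a, π s a * P s a s')
    (lam : ℝ) (hlam0 : 0 < lam) (hlam1 : lam < 1)
    (tγ : ℝ) (htγ : tγ = γ * (1 - lam) / (1 - γ * lam))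
    (Plam : Matrix S S ℝ)
    (hPlam : Plam = (1 - γ * lam) • ∑' t : ℕ, (γ * lam) ^ t • Pπ ^ (t + 1))
    (ρ0 : S → ℝ)
    (hρ0 : ∀ s, 0 ≤ ρ0 s)
    (hρ1 : ∑ s, ρ0 s = 1)
    (dlam : S → ℝ)
    (hdlam : ∀ s, dlam s = (1 - tγ) * ∑' t : ℕ, tγ ^ t * ∑ s0, ρ0 s0 * (Plam ^ t) s0 s) :
    (∀ s, 0 ≤ dlam s) ∧
    (∑ s, dlam s = 1) ∧
    ∀ s, dlam s = (1 - tγ) * ∑ s0, ρ0 s0 * (1 - tγ • Plam)⁻¹ s0 s :=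
  lambda_discounted_state_distribution_general P hP0 hP1 γ hγ0 hγ1 π hπ0 hπ1 Pπ hPπ lam hlam0 hlam1
    tγ htγ Plam hPlam ρ0 hρ0 hρ1 dlam hdlam
end

section
/- (λ-return version of the objective) For every λ ∈ (0,1), the objective J(π) = Σ_{s0} ρ0(s0) v_π[s0] satisfies J(π) = (1/(1-γ̃)) Σ_{s∈S} d_π^{λ}[s] · r_π^{(λ)}[s]. -/
open Matrix
open scoped NNReal

attribute [local instance] Matrix.linftyOpNormedRing Matrix.linftyOpNormedSpace

namespace LambdaReturnAux

variable {S : Type*} [Fintype S] [DecidableEq S]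

lemma entry_abs_le_norm (A : Matrix S S ℝ) (i j : S) : |A i j| ≤ ‖A‖ := by
  rw [Matrix.linfty_opNorm_def]
  have h1 : ‖A i j‖₊ ≤ ∑ k, ‖A i k‖₊ :=
    Finset.single_le_sum (f := fun k => ‖A i k‖₊) (fun k _ => zero_le) (Finset.mem_univ j)
  have h2 : (∑ k, ‖A i k‖₊) ≤ Finset.univ.sup fun i => ∑ j, ‖A i j‖₊ :=
    Finset.le_sup (f := fun i => ∑ j, ‖A i j‖₊) (Finset.mem_univ i)
  calc |A i j| = ((‖A i j‖₊ : ℝ≥0) : ℝ) := by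
        rw [coe_nnnorm, Real.norm_eq_abs]
    _ ≤ _ := by exact_mod_cast h1.trans h2

lemma norm_le_one_of (A : Matrix S S ℝ) (h0 : ∀ i j, 0 ≤ A i j)
    (h1 : ∀ i, ∑ j, A i j = 1) : ‖A‖ ≤ 1 := by
  rw [Matrix.linfty_opNorm_def]
  have h : ((1 : ℝ≥0) : ℝ) = (1 : ℝ) := by norm_num
  rw [← h, NNReal.coe_le_coe]
  refine Finset.sup_le fun i _ => ?_
  rw [← NNReal.coe_le_coe, NNReal.coe_sum, NNReal.coe_one]
  have h2 : ∀ j : S, ((‖A i j‖₊ : ℝ≥0) : ℝ) = A i j := fun j => by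
    rw [coe_nnnorm, Real.norm_eq_abs, abs_of_nonneg (h0 i j)]
  rw [Finset.sum_congr rfl fun j _ => h2 j, h1 i]

/-- `A ↦ A *ᵥ v` as a continuous linear map. -/
noncomputable def mvCLM (v : S → ℝ) : Matrix S S ℝ →L[ℝ] (S → ℝ) :=
  LinearMap.toContinuousLinearMap
    { toFun := fun A => A.mulVec v
      map_add' := fun A B => Matrix.add_mulVec A B v
      map_smul' := fun c A => Matrix.smul_mulVec c A v }

@[simp] lemma mvCLM_apply (v : S → ℝ) (A : Matrix S S ℝ) : mvCLM v A = A *ᵥ v := rfl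

/-- `w ↦ v ⬝ᵥ w` as a continuous linear map. -/
noncomputable def dotCLM (v : S → ℝ) : (S → ℝ) →L[ℝ] ℝ :=
  LinearMap.toContinuousLinearMap
    { toFun := fun w => v ⬝ᵥ w
      map_add' := fun a b => dotProduct_add v a b
      map_smul' := fun c a => dotProduct_smul c v a }

@[simp] lemma dotCLM_apply (v w : S → ℝ) : dotCLM v w = v ⬝ᵥ w := rfl

lemma summable_pow_mulVec {A : Matrix S S ℝ} (hA : ‖A‖ < 1) (v : S → ℝ) :
    Summable (fun t : ℕ => (A ^ t) *ᵥ v) := by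
  haveI : CompleteSpace (Matrix S S ℝ) := FiniteDimensional.complete ℝ _
  exact ((summable_geometric_of_norm_lt_one hA).map (mvCLM v) (mvCLM v).continuous)

lemma tsum_pow_mulVec {A : Matrix S S ℝ} (hA : ‖A‖ < 1) (v : S → ℝ) :
    ∑' t : ℕ, (A ^ t) *ᵥ v = (∑' t : ℕ, A ^ t) *ᵥ v := by
  haveI : CompleteSpace (Matrix S S ℝ) := FiniteDimensional.complete ℝ _
  exact ((mvCLM v).map_tsum (summable_geometric_of_norm_lt_one hA)).symm

lemma norm_pow_le_pow [Nonempty S] {A : Matrix S S ℝ} {c : ℝ} (hc : 0 ≤ c)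
    (hA : ‖A‖ ≤ c) (t : ℕ) : ‖A ^ t‖ ≤ c ^ t := by
  induction t with
  | zero =>
      simp only [pow_zero]
      rw [← Matrix.diagonal_one, Matrix.linfty_opNorm_diagonal]
      simp [Pi.norm_def]
  | succ n ih =>
      calc ‖A ^ (n + 1)‖ = ‖A ^ n * A‖ := by rw [pow_succ]
        _ ≤ ‖A ^ n‖ * ‖A‖ := norm_mul_le _ _
        _ ≤ c ^ n * c := by
            have := norm_nonneg (A ^ n)
            have := norm_nonneg A
            nlinarith [pow_nonneg hc n]
        _ = c ^ (n + 1) := (pow_succ c n).symm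

end LambdaReturnAux

open LambdaReturnAux

/-- λ-return version of the objective:
`J(π) = ∑_{s0} ρ0(s0) v_π[s0] = (1/(1-γ̃)) ∑_s d_π^{λ}[s] r_π^{(λ)}[s]`. -/
theorem lambda_return_objective
    {S A : Type*} [Fintype S] [Nonempty S] [DecidableEq S] [Fintype A] [Nonempty A]
    (P : S → A → S → ℝ)
    (hP0 : ∀ s a s', 0 ≤ P s a s')
    (hP1 : ∀ s a, ∑ s', P s a s' = 1)
    (r : S → A → S → ℝ)
    (γ : ℝ) (hγ0 : 0 < γ) (hγ1 : γ < 1)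
    (π : S → A → ℝ)
    (hπ0 : ∀ s a, 0 ≤ π s a)
    (hπ1 : ∀ s, ∑ a, π s a = 1)
    (Pπ : Matrix S S ℝ)
    (hPπ : ∀ s s', Pπ s s' = ∑ a, π s a * P s a s')
    (rπ : S → ℝ)
    (hrπ : ∀ s, rπ s = ∑ a, ∑ s', π s a * (P s a s' * r s a s'))
    (vπ : S → ℝ)
    (hvπ : vπ = ∑' t : ℕ, γ ^ t • (Pπ ^ t).mulVec rπ)
    (lam : ℝ) (hlam0 : 0 < lam) (hlam1 : lam < 1)
    (tγ : ℝ) (htγ : tγ = γ * (1 - lam) / (1 - γ * lam))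
    (Plam : Matrix S S ℝ)
    (hPlam : Plam = (1 - γ * lam) • ∑' t : ℕ, (γ * lam) ^ t • Pπ ^ (t + 1))
    (rlam : S → ℝ)
    (hrlam : rlam = ∑' t : ℕ, (γ * lam) ^ t • (Pπ ^ t).mulVec rπ)
    (ρ0 : S → ℝ)
    (hρ0 : ∀ s, 0 ≤ ρ0 s)
    (hρ1 : ∑ s, ρ0 s = 1)
    (dlam : S → ℝ)
    (hdlam : ∀ s, dlam s = (1 - tγ) * ∑' t : ℕ, tγ ^ t * ∑ s0, ρ0 s0 * (Plam ^ t) s0 s)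
    (J : ℝ)
    (hJ : J = ∑ s0, ρ0 s0 * vπ s0) :
    J = (1 / (1 - tγ)) * ∑ s, dlam s * rlam s := by
  haveI : CompleteSpace (Matrix S S ℝ) := FiniteDimensional.complete ℝ _
  -- scalar facts
  have hgl0 : (0:ℝ) ≤ γ * lam := by positivity
  have hgl1 : γ * lam < 1 := by
    have h := mul_lt_mul_of_pos_left hlam1 hγ0
    nlinarith
  have h1gl : (0:ℝ) < 1 - γ * lam := by nlinarith
  have htγ0 : 0 ≤ tγ := by
    rw [htγ]; exact div_nonneg (by nlinarith) h1gl.le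
  have htγ1 : tγ < 1 := by rw [htγ, div_lt_one h1gl]; nlinarith
  have htγne : (1:ℝ) - tγ ≠ 0 := by nlinarith
  -- stochasticity of Pπ
  have hPπ0 : ∀ s s', 0 ≤ Pπ s s' := fun s s' => by
    rw [hPπ]; exact Finset.sum_nonneg fun a _ => mul_nonneg (hπ0 s a) (hP0 s a s')
  have hPπ1 : ∀ s, ∑ s', Pπ s s' = 1 := by
    intro s
    simp_rw [hPπ]
    rw [Finset.sum_comm]
    calc ∑ a, ∑ s', π s a * P s a s' = ∑ a, π s a * ∑ s', P s a s' := by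
          simp [Finset.mul_sum]
      _ = ∑ a, π s a := by simp [hP1]
      _ = 1 := hπ1 s
  have hPn : ‖Pπ‖ ≤ 1 := norm_le_one_of _ hPπ0 hPπ1
  -- B := (γ λ) • Pπ
  set B : Matrix S S ℝ := (γ * lam) • Pπ with hB
  have hBnorm : ‖B‖ ≤ γ * lam := by
    rw [hB, norm_smul, Real.norm_eq_abs, abs_of_nonneg hgl0]
    nlinarith [norm_nonneg Pπ]
  have hBn : ‖B‖ < 1 := lt_of_le_of_lt hBnorm hgl1
  have hBpow : ∀ t : ℕ, B ^ t = (γ * lam) ^ t • Pπ ^ t := fun t => smul_pow _ _ _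
  set G : Matrix S S ℝ := ∑' t : ℕ, B ^ t with hGdef
  have hG1 : (1 - B) * G = 1 := mul_neg_geom_series B hBn
  have hG2 : G * (1 - B) = 1 := geom_series_mul_neg B hBn
  -- C := γ • Pπ
  set C : Matrix S S ℝ := γ • Pπ with hC
  have hCn : ‖C‖ < 1 := by
    rw [hC, norm_smul, Real.norm_eq_abs, abs_of_nonneg hγ0.le]
    nlinarith [norm_nonneg Pπ]
  have hCpow : ∀ t : ℕ, C ^ t = γ ^ t • Pπ ^ t := fun t => smul_pow _ _ _
  set H : Matrix S S ℝ := ∑' t : ℕ, C ^ t with hHdef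
  have hH1 : (1 - C) * H = 1 := mul_neg_geom_series C hCn
  -- rlam = G *ᵥ rπ
  have hrlamG : rlam = G *ᵥ rπ := by
    rw [hrlam, hGdef, ← tsum_pow_mulVec hBn rπ]
    congr 1; funext t
    rw [hBpow t, Matrix.smul_mulVec]
  -- vπ = H *ᵥ rπ
  have hvπH : vπ = H *ᵥ rπ := by
    rw [hvπ, hHdef, ← tsum_pow_mulVec hCn rπ]
    congr 1; funext t
    rw [hCpow t, Matrix.smul_mulVec]
  -- Plam = (1-γλ) • (G * Pπ)
  have hPlamG : Plam = (1 - γ * lam) • (G * Pπ) := by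
    rw [hPlam]
    congr 1
    have hs : Summable (fun t : ℕ => B ^ t) := summable_geometric_of_norm_lt_one hBn
    calc ∑' t : ℕ, (γ * lam) ^ t • Pπ ^ (t + 1)
        = ∑' t : ℕ, (B ^ t) * Pπ := by
          congr 1; funext t
          rw [hBpow t, pow_succ, smul_mul_assoc]
      _ = G * Pπ := hs.tsum_mul_right Pπ
  -- norm bound for G and Plam
  have hGn : ‖G‖ ≤ (1 - γ * lam)⁻¹ := by
    have hsn : Summable (fun t : ℕ => ‖B ^ t‖) := by
      refine Summable.of_nonneg_of_le (fun t => norm_nonneg _)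
        (fun t => norm_pow_le_pow hgl0 hBnorm t) ?_
      exact summable_geometric_of_lt_one hgl0 hgl1
    calc ‖G‖ ≤ ∑' t : ℕ, ‖B ^ t‖ := norm_tsum_le_tsum_norm hsn
      _ ≤ ∑' t : ℕ, (γ * lam) ^ t := by
          exact Summable.tsum_le_tsum (fun t => norm_pow_le_pow hgl0 hBnorm t) hsn
            (summable_geometric_of_lt_one hgl0 hgl1)
      _ = (1 - γ * lam)⁻¹ := tsum_geometric_of_lt_one hgl0 hgl1
  have hPlamn : ‖Plam‖ ≤ 1 := by
    rw [hPlamG, norm_smul, Real.norm_eq_abs, abs_of_nonneg h1gl.le]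
    have h2 : ‖G * Pπ‖ ≤ (1 - γ * lam)⁻¹ := by
      refine le_trans (norm_mul_le _ _) ?_
      have hGnn := norm_nonneg G
      have hPnn := norm_nonneg Pπ
      have hinv : (0:ℝ) ≤ (1 - γ * lam)⁻¹ := inv_nonneg.2 h1gl.le
      nlinarith
    calc (1 - γ * lam) * ‖G * Pπ‖ ≤ (1 - γ * lam) * (1 - γ * lam)⁻¹ := by nlinarith
      _ = 1 := mul_inv_cancel₀ (ne_of_gt h1gl)
  -- D := tγ • Plam and K := ∑' D^t
  set D : Matrix S S ℝ := tγ • Plam with hD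
  have hDnorm : ‖D‖ ≤ tγ := by
    rw [hD, norm_smul, Real.norm_eq_abs, abs_of_nonneg htγ0]
    nlinarith [norm_nonneg Plam]
  have hDn : ‖D‖ < 1 := lt_of_le_of_lt hDnorm htγ1
  have hDpow : ∀ t : ℕ, D ^ t = tγ ^ t • Plam ^ t := fun t => smul_pow _ _ _
  set K : Matrix S S ℝ := ∑' t : ℕ, D ^ t with hKdef
  have hK1 : K * (1 - D) = 1 := geom_series_mul_neg D hDn
  -- key algebraic identity
  have hmid : (1 - B) * Plam = (1 - γ * lam) • Pπ := by
    rw [hPlamG, mul_smul_comm, ← mul_assoc, hG1, one_mul]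
  have hscal : tγ * (1 - γ * lam) = γ * (1 - lam) := by
    rw [htγ]; field_simp
  have hkey : (1 - B) * (1 - D) = 1 - C := by
    rw [hD, mul_sub, mul_one, mul_smul_comm, hmid, smul_smul, hscal]
    rw [hB, hC, sub_sub, ← add_smul]
    have : γ * lam + γ * (1 - lam) = γ := by ring
    rw [this]
  -- K * G = H
  have hKG : K * G = H := by
    have e1 : K * G * (1 - C) = 1 := by
      rw [← hkey, ← mul_assoc, mul_assoc K G (1 - B), hG2, mul_one, hK1]
    calc K * G = K * G * ((1 - C) * H) := by rw [hH1, mul_one]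
      _ = (K * G * (1 - C)) * H := (mul_assoc (K * G) (1 - C) H).symm
      _ = H := by rw [e1, one_mul]
  -- vπ = K *ᵥ rlam
  have hvK : K *ᵥ rlam = vπ := by
    rw [hrlamG, Matrix.mulVec_mulVec, hKG, ← hvπH]
  -- the tsum form of vπ
  have hsum_main : ∑' t : ℕ, tγ ^ t • ((Plam ^ t) *ᵥ rlam) = vπ := by
    rw [← hvK, hKdef, ← tsum_pow_mulVec hDn rlam]
    congr 1; funext t
    rw [hDpow t, Matrix.smul_mulVec]
  have hsummD : Summable (fun t : ℕ => tγ ^ t • ((Plam ^ t) *ᵥ rlam)) := by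
    refine (summable_pow_mulVec hDn rlam).congr fun t => ?_
    rw [hDpow t, Matrix.smul_mulVec]
  -- summability of the scalar summands
  have hPlt : ∀ t : ℕ, ‖Plam ^ t‖ ≤ 1 := fun t => by
    simpa using norm_pow_le_pow zero_le_one hPlamn t
  have hw : ∀ (t : ℕ) (s : S), |∑ s0, ρ0 s0 * (Plam ^ t) s0 s| ≤ 1 := by
    intro t s
    calc |∑ s0, ρ0 s0 * (Plam ^ t) s0 s| ≤ ∑ s0, |ρ0 s0 * (Plam ^ t) s0 s| :=
          Finset.abs_sum_le_sum_abs _ _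
      _ ≤ ∑ s0, ρ0 s0 * ‖Plam ^ t‖ := by
          refine Finset.sum_le_sum fun s0 _ => ?_
          rw [abs_mul, abs_of_nonneg (hρ0 s0)]
          exact mul_le_mul_of_nonneg_left (entry_abs_le_norm _ _ _) (hρ0 s0)
      _ = ‖Plam ^ t‖ := by rw [← Finset.sum_mul, hρ1, one_mul]
      _ ≤ 1 := hPlt t
  have hsummand : ∀ s : S,
      Summable (fun t : ℕ => (tγ ^ t * ∑ s0, ρ0 s0 * (Plam ^ t) s0 s) * rlam s) := by
    intro s
    refine Summable.of_norm_bounded (g := fun t => tγ ^ t * |rlam s|)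
      (((summable_geometric_of_lt_one htγ0 htγ1)).mul_right _) fun t => ?_
    rw [Real.norm_eq_abs, abs_mul, abs_mul, abs_pow, abs_of_nonneg htγ0]
    exact mul_le_mul_of_nonneg_right
      (mul_le_of_le_one_right (pow_nonneg htγ0 t) (hw t s)) (abs_nonneg (rlam s))
  -- main computation
  have key : ∑ s, dlam s * rlam s = (1 - tγ) * J := by
    have hterm : ∀ s : S, dlam s * rlam s
        = (1 - tγ) * ∑' t : ℕ, (tγ ^ t * ∑ s0, ρ0 s0 * (Plam ^ t) s0 s) * rlam s := by
      intro s
      rw [hdlam s, mul_assoc, ← tsum_mul_right]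
    calc ∑ s, dlam s * rlam s
        = ∑ s, (1 - tγ) * ∑' t : ℕ, (tγ ^ t * ∑ s0, ρ0 s0 * (Plam ^ t) s0 s) * rlam s :=
          Finset.sum_congr rfl fun s _ => hterm s
      _ = (1 - tγ) * ∑ s, ∑' t : ℕ, (tγ ^ t * ∑ s0, ρ0 s0 * (Plam ^ t) s0 s) * rlam s := by
          rw [Finset.mul_sum]
      _ = (1 - tγ) * ∑' t : ℕ, ∑ s, (tγ ^ t * ∑ s0, ρ0 s0 * (Plam ^ t) s0 s) * rlam s := by
          rw [Summable.tsum_finsetSum fun s _ => hsummand s]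
      _ = (1 - tγ) * ∑' t : ℕ, ρ0 ⬝ᵥ (tγ ^ t • ((Plam ^ t) *ᵥ rlam)) := by
          congr 1
          refine tsum_congr fun t => ?_
          rw [dotProduct_smul]
          simp only [dotProduct, Matrix.mulVec, smul_eq_mul, Finset.mul_sum,
            Finset.sum_mul]
          rw [Finset.sum_comm]
          refine Finset.sum_congr rfl fun s _ => ?_
          refine Finset.sum_congr rfl fun s0 _ => ?_
          ring
      _ = (1 - tγ) * (ρ0 ⬝ᵥ ∑' t : ℕ, tγ ^ t • ((Plam ^ t) *ᵥ rlam)) := by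
          congr 1
          have := ((dotCLM ρ0).map_tsum hsummD).symm
          simpa using this
      _ = (1 - tγ) * (ρ0 ⬝ᵥ vπ) := by rw [hsum_main]
      _ = (1 - tγ) * J := by
          rw [hJ]; congr 1
  rw [key]
  field_simp
end

section
/- (General version of the objective) For every λ ∈ (0,1) and every function φ : S → ℝ, the objective J(π) = Σ_{s0} ρ0(s0) v_π[s0] satisfies J(π) = Σ_{s0} ρ0(s0) φ(s0) + (1/(1-γ̃)) Σ_{s∈S} d_π^{λ}[s] · Σ_{t=0}^∞ (γλ)^t δ_{π,t}^{φ}[s], where δ_{π,t}^{φ} := P_π^t (r_π + γ P_π φ - φ) ∈ ℝ^S is the vector of expected TD errors of φ after t steps; equivalently J(π) = ⟨ρ0, φ⟩ + (1/(1-γ̃)) Σ_{t=0}^∞ (γλ)^t ⟨d_π^{λ}, δ_{π,t}^{φ}⟩. -/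
section Aux

attribute [local instance] Matrix.linftyOpNormedRing Matrix.linftyOpNormedAlgebra

variable {S : Type*} [Fintype S] [Nonempty S] [DecidableEq S]

private lemma stoch_norm_le_one (M : Matrix S S ℝ)
    (h0 : ∀ i j, 0 ≤ M i j) (h1 : ∀ i, ∑ j, M i j = 1) : ‖M‖ ≤ 1 := by
  rw [Matrix.linfty_opNorm_def]
  have key : (Finset.univ : Finset S).sup (fun i => ∑ j, ‖M i j‖₊) ≤ 1 := by
    refine Finset.sup_le fun i _ => ?_
    have h2 : ((∑ j, ‖M i j‖₊ : NNReal) : ℝ) = 1 := by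
      push_cast
      rw [← h1 i]
      exact Finset.sum_congr rfl fun j _ => by
        rw [Real.norm_eq_abs, abs_of_nonneg (h0 i j)]
    exact le_of_eq (NNReal.coe_injective (by simpa using h2))
  exact_mod_cast key

/-- `mulVec` by a fixed vector, as a linear map in the matrix. -/
private def mvR (v : S → ℝ) : Matrix S S ℝ →ₗ[ℝ] (S → ℝ) where
  toFun M := M.mulVec v
  map_add' A B := Matrix.add_mulVec A B v
  map_smul' c A := Matrix.smul_mulVec c A v

/-- `vecMul` by a fixed vector, as a linear map in the matrix. -/
private def vmL (v : S → ℝ) : Matrix S S ℝ →ₗ[ℝ] (S → ℝ) where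
  toFun M := Matrix.vecMul v M
  map_add' A B := Matrix.vecMul_add A B v
  map_smul' c A := by
    ext j
    simp [Matrix.vecMul, dotProduct, Finset.mul_sum, mul_left_comm]

private theorem general_objective_aux
    {S A : Type*} [Fintype S] [Nonempty S] [DecidableEq S] [Fintype A] [Nonempty A]
    (P : S → A → S → ℝ)
    (hP0 : ∀ s a s', 0 ≤ P s a s')
    (hP1 : ∀ s a, ∑ s', P s a s' = 1)
    (r : S → A → S → ℝ)
    (γ : ℝ) (hγ0 : 0 < γ) (hγ1 : γ < 1)
    (π : S → A → ℝ)
    (hπ0 : ∀ s a, 0 ≤ π s a)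
    (hπ1 : ∀ s, ∑ a, π s a = 1)
    (Pπ : Matrix S S ℝ)
    (hPπ : ∀ s s', Pπ s s' = ∑ a, π s a * P s a s')
    (rπ : S → ℝ)
    (hrπ : ∀ s, rπ s = ∑ a, ∑ s', π s a * (P s a s' * r s a s'))
    (vπ : S → ℝ)
    (hvπ : vπ = ∑' t : ℕ, γ ^ t • (Pπ ^ t).mulVec rπ)
    (lam : ℝ) (hlam0 : 0 < lam) (hlam1 : lam < 1)
    (tγ : ℝ) (htγ : tγ = γ * (1 - lam) / (1 - γ * lam))
    (Plam : Matrix S S ℝ)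
    (hPlam : Plam = (1 - γ * lam) • ∑' t : ℕ, (γ * lam) ^ t • Pπ ^ (t + 1))
    (ρ0 : S → ℝ)
    (hρ0 : ∀ s, 0 ≤ ρ0 s)
    (hρ1 : ∑ s, ρ0 s = 1)
    (dlam : S → ℝ)
    (hdlam : ∀ s, dlam s = (1 - tγ) * ∑' t : ℕ, tγ ^ t * ∑ s0, ρ0 s0 * (Plam ^ t) s0 s)
    (J : ℝ)
    (hJ : J = ∑ s0, ρ0 s0 * vπ s0)
    (φ : S → ℝ)
    (δ : ℕ → S → ℝ)
    (hδ : ∀ t, δ t = (Pπ ^ t).mulVec (rπ + γ • Pπ.mulVec φ - φ)) :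
    J = (∑ s0, ρ0 s0 * φ s0)
        + (1 / (1 - tγ)) * ∑ s, dlam s * ∑' t : ℕ, (γ * lam) ^ t * δ t s ∧
    J = (∑ s0, ρ0 s0 * φ s0)
        + (1 / (1 - tγ)) * ∑' t : ℕ, (γ * lam) ^ t * ∑ s, dlam s * δ t s := by
  -- scalar facts
  set c : ℝ := γ * lam with hc
  have hc0 : 0 < c := mul_pos hγ0 hlam0
  have hc1 : c < 1 := by nlinarith
  have h1c : 0 < 1 - c := by linarith
  have htγ0 : 0 ≤ tγ := by
    rw [htγ]
    apply div_nonneg (by nlinarith) (by linarith)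
  have htγ1 : tγ < 1 := by
    rw [htγ, div_lt_one h1c]; nlinarith
  have htγc : tγ * (1 - c) = γ - c := by
    rw [htγ]; field_simp; ring
  have h1tγ : (0:ℝ) < 1 - tγ := by linarith
  -- stochasticity of Pπ
  have hPπ0 : ∀ s s', 0 ≤ Pπ s s' := fun s s' => by
    rw [hPπ]; exact Finset.sum_nonneg fun a _ => mul_nonneg (hπ0 s a) (hP0 s a s')
  have hPπ1 : ∀ s, ∑ s', Pπ s s' = 1 := fun s => by
    simp_rw [hPπ]
    rw [Finset.sum_comm]
    simp_rw [← Finset.mul_sum, hP1, mul_one]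
    exact hπ1 s
  have hnPπ : ‖Pπ‖ ≤ 1 := stoch_norm_le_one Pπ hPπ0 hPπ1
  -- geometric series for X = γ • Pπ
  set X : Matrix S S ℝ := γ • Pπ with hX
  have hnX : ‖X‖ < 1 := by
    rw [hX, norm_smul, Real.norm_eq_abs, abs_of_nonneg hγ0.le]
    nlinarith [norm_nonneg Pπ]
  have hsX : Summable (fun t : ℕ => X ^ t) := summable_geometric_of_norm_lt_one hnX
  set G : Matrix S S ℝ := ∑' t : ℕ, X ^ t with hG
  have hGmul : (1 - X) * G = 1 := mul_neg_geom_series X hnX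
  -- geometric series for Y = c • Pπ
  set Y : Matrix S S ℝ := c • Pπ with hY
  have hnYc : ‖Y‖ ≤ c := by
    rw [hY, norm_smul, Real.norm_eq_abs, abs_of_nonneg hc0.le]
    nlinarith [norm_nonneg Pπ]
  have hnY : ‖Y‖ < 1 := lt_of_le_of_lt hnYc hc1
  have hsY : Summable (fun t : ℕ => Y ^ t) := summable_geometric_of_norm_lt_one hnY
  set H : Matrix S S ℝ := ∑' t : ℕ, Y ^ t with hH
  have hHmul : (1 - Y) * H = 1 := mul_neg_geom_series Y hnY
  have hXpow : ∀ t : ℕ, X ^ t = γ ^ t • Pπ ^ t := fun t => by rw [hX, smul_pow]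
  have hYpow : ∀ t : ℕ, Y ^ t = c ^ t • Pπ ^ t := fun t => by rw [hY, smul_pow]
  have hmvc : ∀ v : S → ℝ, Continuous (mvR (S := S) v) :=
    fun v => (mvR v).continuous_of_finiteDimensional
  have hvmc : ∀ v : S → ℝ, Continuous (vmL (S := S) v) :=
    fun v => (vmL v).continuous_of_finiteDimensional
  -- vπ = G *ᵥ rπ
  have hvG : vπ = G.mulVec rπ := by
    rw [hvπ]
    have h1 : HasSum (fun t : ℕ => (X ^ t).mulVec rπ) (G.mulVec rπ) :=
      hsX.hasSum.map (mvR (S := S) rπ) (hmvc rπ)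
    rw [← h1.tsum_eq]
    congr 1; funext t
    rw [hXpow, Matrix.smul_mulVec]
  have hsubG : G - X * G = 1 := by
    have h : G - X * G = (1 - X) * G := by rw [sub_mul, one_mul]
    rw [h, hGmul]
  have hBell : vπ - X.mulVec vπ = rπ := by
    rw [hvG, Matrix.mulVec_mulVec, ← Matrix.sub_mulVec, hsubG, Matrix.one_mulVec]
  -- TD error vector
  set e : S → ℝ := rπ + γ • Pπ.mulVec φ - φ with he0
  have he : (1 - X).mulVec (vπ - φ) = e := by
    have h : (1 - X).mulVec (vπ - φ) = (vπ - X.mulVec vπ) - (φ - X.mulVec φ) := by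
      rw [Matrix.mulVec_sub, Matrix.sub_mulVec, Matrix.sub_mulVec,
        Matrix.one_mulVec, Matrix.one_mulVec]
    rw [h, hBell, he0, hX, Matrix.smul_mulVec]
    abel
  -- Plam in terms of H
  have hPlam2 : Plam = (1 - c) • (Pπ * H) := by
    rw [hPlam]
    congr 1
    have h2 : HasSum (fun t : ℕ => Pπ * Y ^ t) (Pπ * H) := hsY.hasSum.mul_left Pπ
    rw [← h2.tsum_eq]
    congr 1; funext t
    rw [hYpow, mul_smul_comm, ← pow_succ']
  have hcommPH : Pπ * H = H * Pπ := by
    have h2 : HasSum (fun t : ℕ => Pπ * Y ^ t) (Pπ * H) := hsY.hasSum.mul_left Pπ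
    have h3 : HasSum (fun t : ℕ => Y ^ t * Pπ) (H * Pπ) := hsY.hasSum.mul_right Pπ
    rw [← h2.tsum_eq, ← h3.tsum_eq]
    congr 1; funext t
    rw [hYpow, mul_smul_comm, smul_mul_assoc, ← pow_succ, ← pow_succ']
  -- norm bound for Plam
  have hnYt : ∀ t : ℕ, ‖Y ^ t‖ ≤ c ^ t := fun t =>
    le_trans (norm_pow_le Y t) (pow_le_pow_left₀ (norm_nonneg Y) hnYc t)
  have hsc : Summable (fun t : ℕ => c ^ t) := summable_geometric_of_lt_one hc0.le hc1
  have hsnY : Summable (fun t : ℕ => ‖Y ^ t‖) :=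
    Summable.of_nonneg_of_le (fun t => norm_nonneg _) hnYt hsc
  have hnH : ‖H‖ ≤ (1 - c)⁻¹ := by
    calc ‖H‖ ≤ ∑' t : ℕ, ‖Y ^ t‖ := norm_tsum_le_tsum_norm hsnY
      _ ≤ ∑' t : ℕ, c ^ t := Summable.tsum_le_tsum hnYt hsnY hsc
      _ = (1 - c)⁻¹ := tsum_geometric_of_lt_one hc0.le hc1
  have hnPlam : ‖Plam‖ ≤ 1 := by
    rw [hPlam2, norm_smul, Real.norm_eq_abs, abs_of_nonneg h1c.le]
    have h4 : ‖Pπ * H‖ ≤ 1 * (1 - c)⁻¹ :=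
      le_trans (norm_mul_le _ _) (mul_le_mul hnPπ hnH (norm_nonneg _) zero_le_one)
    calc (1 - c) * ‖Pπ * H‖ ≤ (1 - c) * (1 * (1 - c)⁻¹) :=
          mul_le_mul_of_nonneg_left h4 h1c.le
      _ = 1 := by field_simp
  -- geometric series for Z = tγ • Plam
  set Z : Matrix S S ℝ := tγ • Plam with hZ
  have hnZ : ‖Z‖ < 1 := by
    rw [hZ, norm_smul, Real.norm_eq_abs, abs_of_nonneg htγ0]
    nlinarith [norm_nonneg Plam]
  have hsZ : Summable (fun t : ℕ => Z ^ t) := summable_geometric_of_norm_lt_one hnZ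
  set K : Matrix S S ℝ := ∑' t : ℕ, Z ^ t with hK
  have hKmul : K * (1 - Z) = 1 := geom_series_mul_neg Z hnZ
  have hZpow : ∀ t : ℕ, Z ^ t = tγ ^ t • Plam ^ t := fun t => by rw [hZ, smul_pow]
  -- key algebraic identity
  have hH1 : H = 1 + Y * H := by
    have h5 : (1 - Y) * H = H - Y * H := by rw [sub_mul, one_mul]
    have h6 : H - Y * H = 1 := by rw [← h5, hHmul]
    rw [← h6]; abel
  have hZ1 : 1 - Z = (1 - X) * H := by
    have h6 : X * H = γ • (Pπ * H) := by rw [hX, smul_mul_assoc]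
    have h7 : Y * H = c • (Pπ * H) := by rw [hY, smul_mul_assoc]
    calc 1 - Z = 1 - (tγ * (1 - c)) • (Pπ * H) := by rw [hZ, hPlam2, smul_smul]
      _ = 1 - (γ - c) • (Pπ * H) := by rw [htγc]
      _ = (1 + c • (Pπ * H)) - γ • (Pπ * H) := by rw [sub_smul]; abel
      _ = (1 - X) * H := by rw [sub_mul, one_mul, h6, ← h7, ← hH1]
  have hcommXH : H * (1 - X) = (1 - X) * H := by
    rw [mul_sub, sub_mul, mul_one, one_mul]
    congr 1
    rw [hX, mul_smul_comm, smul_mul_assoc, hcommPH]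
  have hKHX : K * (H * (1 - X)) = 1 := by
    rw [hcommXH, ← hZ1, hKmul]
  -- the inner tsum over t
  have hwsum : ∀ s : S, HasSum (fun t : ℕ => c ^ t * δ t s) ((H.mulVec e) s) := by
    intro s
    have h8 : HasSum (fun t : ℕ => (Y ^ t).mulVec e) (H.mulVec e) :=
      hsY.hasSum.map (mvR (S := S) e) (hmvc e)
    have h9 := Pi.hasSum.mp h8 s
    have h10 : (fun t : ℕ => c ^ t * δ t s) = fun t : ℕ => ((Y ^ t).mulVec e) s := by
      funext t
      rw [hδ t, hYpow, Matrix.smul_mulVec]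
      rfl
    rw [h10]
    exact h9
  -- dlam in terms of K
  have hdK : ∀ s : S, dlam s = (1 - tγ) * (Matrix.vecMul ρ0 K) s := by
    intro s
    rw [hdlam s]
    congr 1
    have h10 : HasSum (fun t : ℕ => Matrix.vecMul ρ0 (Z ^ t)) (Matrix.vecMul ρ0 K) :=
      hsZ.hasSum.map (vmL (S := S) ρ0) (hvmc ρ0)
    have h11 := Pi.hasSum.mp h10 s
    rw [← h11.tsum_eq]
    congr 1; funext t
    rw [hZpow]
    simp only [Matrix.vecMul, dotProduct, Matrix.smul_apply, smul_eq_mul,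
      Finset.mul_sum]
    exact Finset.sum_congr rfl fun s0 _ => by ring
  -- the main dot-product computation
  have hdot : ∑ s, (Matrix.vecMul ρ0 K) s * (H.mulVec e) s = ∑ s, ρ0 s * (vπ s - φ s) := by
    have h12 : dotProduct (Matrix.vecMul ρ0 K) (H.mulVec e)
        = dotProduct ρ0 (vπ - φ) := by
      rw [Matrix.dotProduct_mulVec, Matrix.vecMul_vecMul, ← he,
        Matrix.dotProduct_mulVec, Matrix.vecMul_vecMul, mul_assoc, hKHX,
        Matrix.vecMul_one]
    simpa [dotProduct, Pi.sub_apply] using h12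
  have hA : ∑ s, dlam s * ∑' t : ℕ, c ^ t * δ t s
      = (1 - tγ) * ∑ s, ρ0 s * (vπ s - φ s) := by
    calc ∑ s, dlam s * ∑' t : ℕ, c ^ t * δ t s
        = ∑ s, ((1 - tγ) * (Matrix.vecMul ρ0 K) s) * ((H.mulVec e) s) :=
          Finset.sum_congr rfl fun s _ => by rw [hdK s, (hwsum s).tsum_eq]
      _ = (1 - tγ) * ∑ s, (Matrix.vecMul ρ0 K) s * (H.mulVec e) s := by
          rw [Finset.mul_sum]
          exact Finset.sum_congr rfl fun s _ => by ring
      _ = (1 - tγ) * ∑ s, ρ0 s * (vπ s - φ s) := by rw [hdot]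
  have hfinal : (1 / (1 - tγ)) * ((1 - tγ) * ∑ s, ρ0 s * (vπ s - φ s))
      = ∑ s, ρ0 s * vπ s - ∑ s, ρ0 s * φ s := by
    rw [one_div, inv_mul_cancel_left₀ (ne_of_gt h1tγ)]
    simp [mul_sub, Finset.sum_sub_distrib]
  have hswap : ∑' t : ℕ, c ^ t * ∑ s, dlam s * δ t s
      = ∑ s, dlam s * ∑' t : ℕ, c ^ t * δ t s := by
    have hsummand : ∀ t : ℕ, c ^ t * ∑ s, dlam s * δ t s
        = ∑ s, dlam s * (c ^ t * δ t s) := by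
      intro t
      rw [Finset.mul_sum]
      exact Finset.sum_congr rfl fun s _ => by ring
    simp_rw [hsummand]
    rw [Summable.tsum_finsetSum (fun s _ => ((hwsum s).summable.mul_left (dlam s)))]
    exact Finset.sum_congr rfl fun s _ => by rw [tsum_mul_left]
  constructor
  · rw [hJ, hA, hfinal]; ring
  · rw [hJ, hswap, hA, hfinal]; ring


end Aux

/-- General version of the objective: for any `φ : S → ℝ`,
`J(π) = ⟨ρ0, φ⟩ + (1/(1-γ̃)) ∑_s d_π^{λ}[s] ∑_t (γλ)^t δ_{π,t}^{φ}[s]`,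
where `δ_{π,t}^{φ} = P_π^t (r_π + γ P_π φ - φ)` is the vector of expected TD
errors of `φ` after `t` steps; equivalently
`J(π) = ⟨ρ0, φ⟩ + (1/(1-γ̃)) ∑_t (γλ)^t ⟨d_π^{λ}, δ_{π,t}^{φ}⟩`. -/
theorem general_objective
    {S A : Type*} [Fintype S] [Nonempty S] [DecidableEq S] [Fintype A] [Nonempty A]
    (P : S → A → S → ℝ)
    (hP0 : ∀ s a s', 0 ≤ P s a s')
    (hP1 : ∀ s a, ∑ s', P s a s' = 1)
    (r : S → A → S → ℝ)
    (γ : ℝ) (hγ0 : 0 < γ) (hγ1 : γ < 1)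
    (π : S → A → ℝ)
    (hπ0 : ∀ s a, 0 ≤ π s a)
    (hπ1 : ∀ s, ∑ a, π s a = 1)
    (Pπ : Matrix S S ℝ)
    (hPπ : ∀ s s', Pπ s s' = ∑ a, π s a * P s a s')
    (rπ : S → ℝ)
    (hrπ : ∀ s, rπ s = ∑ a, ∑ s', π s a * (P s a s' * r s a s'))
    (vπ : S → ℝ)
    (hvπ : vπ = ∑' t : ℕ, γ ^ t • (Pπ ^ t).mulVec rπ)
    (lam : ℝ) (hlam0 : 0 < lam) (hlam1 : lam < 1)
    (tγ : ℝ) (htγ : tγ = γ * (1 - lam) / (1 - γ * lam))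
    (Plam : Matrix S S ℝ)
    (hPlam : Plam = (1 - γ * lam) • ∑' t : ℕ, (γ * lam) ^ t • Pπ ^ (t + 1))
    (ρ0 : S → ℝ)
    (hρ0 : ∀ s, 0 ≤ ρ0 s)
    (hρ1 : ∑ s, ρ0 s = 1)
    (dlam : S → ℝ)
    (hdlam : ∀ s, dlam s = (1 - tγ) * ∑' t : ℕ, tγ ^ t * ∑ s0, ρ0 s0 * (Plam ^ t) s0 s)
    (J : ℝ)
    (hJ : J = ∑ s0, ρ0 s0 * vπ s0)
    (φ : S → ℝ)
    (δ : ℕ → S → ℝ)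
    (hδ : ∀ t, δ t = (Pπ ^ t).mulVec (rπ + γ • Pπ.mulVec φ - φ)) :
    J = (∑ s0, ρ0 s0 * φ s0)
        + (1 / (1 - tγ)) * ∑ s, dlam s * ∑' t : ℕ, (γ * lam) ^ t * δ t s ∧
    J = (∑ s0, ρ0 s0 * φ s0)
        + (1 / (1 - tγ)) * ∑' t : ℕ, (γ * lam) ^ t * ∑ s, dlam s * δ t s :=
  general_objective_aux P hP0 hP1 r γ hγ0 hγ1 π hπ0 hπ1 Pπ hPπ rπ hrπ vπ hvπ lam hlam0 hlam1 tγ htγ Plam hPlam ρ0 hρ0 hρ1 dlam hdlam J hJ φ δ hδ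
end
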